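/- arXiv:math/0411147 — 5 statements merged into one kernel-verified Lean document; each statement's English description precedes it below -/
import Mathlib

section
/- For n ≥ 1 and distinct complex numbers z₁,…,zₙ, the triple sum ∑_{r=1}^{n} ∑_{1 ≤ s₁ < s₂ ≤ n, s₁,s₂ ≠ r} z_r² / ((z_{s₁} - z_r)(z_{s₂} - z_r)) equals (n-1)n(n-2)/6, i.e. the binomial coefficient (n choose 3). -/
/-!
Grouping the terms by the three-element set `{r, s₁, s₂}`, each such set `T` contributes
`∑_{r ∈ T} z_r² / ∏_{s ∈ T \ {r}} (z_r - z_s)`, which is the Lagrange-interpolation formula for the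
leading coefficient of `X²` from its values at the three nodes of `T`, hence `1`.
-/

open Finset

theorem Finset.sum_sum_powersetCard_erase {α M : Type*} [DecidableEq α] [AddCommMonoid M]
    (s : Finset α) (k : ℕ) (g : α → Finset α → M) :
    ∑ r ∈ s, ∑ P ∈ powersetCard k (s.erase r), g r P =
      ∑ T ∈ powersetCard (k + 1) s, ∑ r ∈ T, g r (T.erase r) := by
  rw [sum_sigma', sum_sigma']
  refine sum_bij' (fun x _ => ⟨insert x.1 x.2, x.1⟩) (fun y _ => ⟨y.2, y.1.erase y.2⟩)
    ?_ ?_ ?_ ?_ ?_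
  all_goals
    rintro ⟨a, b⟩ h
    simp only [mem_sigma, mem_powersetCard, subset_erase] at h
  · simp only [mem_sigma, mem_powersetCard]
    exact ⟨⟨insert_subset h.1 h.2.1.1, by rw [card_insert_of_notMem h.2.1.2, h.2.2]⟩,
      mem_insert_self _ _⟩
  · simp only [mem_sigma, mem_powersetCard]
    exact ⟨h.1.1 h.2, erase_subset_erase _ h.1.1, by rw [card_erase_of_mem h.2, h.1.2]; rfl⟩
  · simp [erase_insert h.2.1.2]
  · simp [insert_erase h.2]
  · simp [erase_insert h.2.1.2]

theorem Finset.sum_filter_lt_eq_sum_powersetCard_two {α M : Type*} [LinearOrder α]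
    [AddCommMonoid M] (s : Finset α) (f : Finset α → M) :
    ∑ p ∈ s ×ˢ s with p.1 < p.2, f {p.1, p.2} = ∑ P ∈ powersetCard 2 s, f P := by
  refine sum_bij (fun p _ => {p.1, p.2}) ?_ ?_ ?_ (fun _ _ => rfl)
  · rintro ⟨a, b⟩ h
    simp only [mem_filter, mem_product] at h
    exact mem_powersetCard.2 ⟨insert_subset h.1.1 (singleton_subset_iff.2 h.1.2),
      card_pair h.2.ne⟩
  · rintro ⟨a, b⟩ h ⟨c, d⟩ h' hP
    have hc : c ∈ ({a, b} : Finset α) := hP ▸ mem_insert_self c {d}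
    have hd : d ∈ ({a, b} : Finset α) := hP ▸ mem_insert_of_mem (mem_singleton_self d)
    have ha : a ∈ ({c, d} : Finset α) := hP.symm ▸ mem_insert_self a {b}
    simp only [mem_filter, mem_insert, mem_singleton] at h h' hc hd ha
    grind
  · intro P hP
    obtain ⟨hPs, hP2⟩ := mem_powersetCard.1 hP
    obtain ⟨a, b, hab, rfl⟩ := card_eq_two.1 hP2
    rcases hab.lt_or_gt with h | h
    · exact ⟨(a, b), by simp_all [insert_subset_iff], rfl⟩
    · exact ⟨(b, a), by simp_all [insert_subset_iff], pair_comm _ _⟩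

theorem Lagrange.sum_pow_div_prod_sub_eq_one {ι F : Type*} [DecidableEq ι] [Field F]
    {s : Finset ι} {v : ι → F} (hvs : Set.InjOn v s) {k : ℕ} (hk : #s = k + 1) :
    ∑ i ∈ s, v i ^ k / ∏ j ∈ s.erase i, (v i - v j) = 1 := by
  have := Lagrange.coeff_eq_sum hvs (P := Polynomial.X ^ k) (by
    rw [Polynomial.degree_X_pow, hk]; exact_mod_cast Nat.lt_succ_self k)
  simpa [hk] using this.symm

theorem sum_ratio_eq_choose_three_general (n : ℕ) (z : Fin n → ℂ)
    (hz : Function.Injective z) :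
    ∑ r : Fin n, ∑ p ∈ Finset.univ.filter
        (fun p : Fin n × Fin n => p.1 < p.2 ∧ p.1 ≠ r ∧ p.2 ≠ r),
      z r ^ 2 / ((z p.1 - z r) * (z p.2 - z r))
    = (n.choose 3 : ℂ) := by
  calc _ = ∑ r, ∑ P ∈ powersetCard 2 (univ.erase r), z r ^ 2 / ∏ s ∈ P, (z r - z s) := by
        refine sum_congr rfl fun r _ => ?_
        rw [← sum_filter_lt_eq_sum_powersetCard_two]
        refine sum_congr (by ext; simp [and_comm]) fun p hp => ?_
        rw [prod_pair (mem_filter.1 hp).2.ne]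
        ring
    _ = ∑ T ∈ powersetCard 3 univ, ∑ r ∈ T, z r ^ 2 / ∏ s ∈ T.erase r, (z r - z s) :=
        sum_sum_powersetCard_erase _ _ _
    _ = ∑ T ∈ powersetCard 3 (univ : Finset (Fin n)), 1 :=
        sum_congr rfl fun T hT =>
          Lagrange.sum_pow_div_prod_sub_eq_one hz.injOn (mem_powersetCard.1 hT).2
    _ = n.choose 3 := by simp

/-- For pairwise distinct complex `z₁,…,zₙ` (n ≥ 1),
`∑_{r} ∑_{s₁<s₂, s₁,s₂≠r} z_r²/((z_{s₁}-z_r)(z_{s₂}-z_r)) = (n choose 3)`. -/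
theorem sum_ratio_eq_choose_three (n : ℕ) (hn : 1 ≤ n) (z : Fin n → ℂ)
    (hz : Function.Injective z) :
    ∑ r : Fin n, ∑ p ∈ Finset.univ.filter
        (fun p : Fin n × Fin n => p.1 < p.2 ∧ p.1 ≠ r ∧ p.2 ≠ r),
      z r ^ 2 / ((z p.1 - z r) * (z p.2 - z r))
    = (n.choose 3 : ℂ) :=
  sum_ratio_eq_choose_three_general n z hz
end

section
/- The Vandermonde determinant W(z₁,…,zₙ) = ∏_{1≤i<j≤n}(z_i - z_j), viewed as a function of complex variables, satisfies ∑_{i=1}^n (z_i ∂_{z_i})² (W) = ((n-1)n(2n-1)/6) · W. -/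
/-!
Expanding the Vandermonde determinant writes `W` as a signed sum of the monomials
`∏ j, z_j ^ σ(j)` over permutations `σ`. The operator `z_i ∂_{z_i}` multiplies a monomial by
its exponent of `z_i`, so `∑ i, (z_i ∂_{z_i})²` multiplies the monomial of `σ` by
`∑ i, σ(i)² = ∑_{k<n} k² = (n-1)n(2n-1)/6`, independently of `σ`.
-/

/-- The operator `z_r ∂_{z_r}` on complex functions of `n` complex variables. -/
noncomputable def zDc {n : ℕ} (r : Fin n) (f : (Fin n → ℂ) → ℂ) : (Fin n → ℂ) → ℂ :=
  fun z => z r * deriv (fun t => f (Function.update z r t)) (z r)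

/-- The Vandermonde function `W(z) = ∏_{i<j} (z_i - z_j)`. -/
def vandermondeW (n : ℕ) : (Fin n → ℂ) → ℂ :=
  fun z => ∏ p ∈ Finset.univ.filter (fun p : Fin n × Fin n => p.1 < p.2), (z p.1 - z p.2)

open Finset Function Matrix Equiv

lemma prod_update_pow {ι M : Type*} [Fintype ι] [DecidableEq ι] [CommMonoid M]
    (z : ι → M) (r : ι) (t : M) (e : ι → ℕ) :
    ∏ j, update z r t j ^ e j = t ^ e r * ∏ j ∈ univ.erase r, z j ^ e j := by
  rw [← mul_prod_erase univ _ (mem_univ r), update_self]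
  congr 1
  exact prod_congr rfl fun j hj => by rw [update_of_ne (ne_of_mem_erase hj)]

lemma hasDerivAt_prod_update_pow {𝕜 ι : Type*} [NontriviallyNormedField 𝕜] [Fintype ι]
    [DecidableEq ι] (z : ι → 𝕜) (r : ι) (e : ι → ℕ) :
    HasDerivAt (fun t => ∏ j, update z r t j ^ e j)
      (e r * z r ^ (e r - 1) * ∏ j ∈ univ.erase r, z j ^ e j) (z r) := by
  simp only [prod_update_pow]
  exact (hasDerivAt_pow (e r) (z r)).mul_const _

lemma mul_deriv_prod_update_pow {R ι : Type*} [CommSemiring R] [Fintype ι] [DecidableEq ι]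
    (z : ι → R) (r : ι) (e : ι → ℕ) :
    z r * (e r * z r ^ (e r - 1) * ∏ j ∈ univ.erase r, z j ^ e j) = e r * ∏ j, z j ^ e j := by
  rw [← mul_prod_erase univ (fun j => z j ^ e j) (mem_univ r)]
  rcases eq_or_ne (e r) 0 with h | h
  · simp [h]
  · rw [← mul_pow_sub_one h (z r)]
    ring

lemma zDc_sum_monomial {n : ℕ} {ι : Type*} [Fintype ι] (c : ι → ℂ) (e : ι → Fin n → ℕ)
    (r : Fin n) :
    zDc r (fun z => ∑ s, c s * ∏ j, z j ^ e s j)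
      = fun z => ∑ s, c s * e s r * ∏ j, z j ^ e s j := by
  funext z
  have hderiv := HasDerivAt.fun_sum fun s (_ : s ∈ univ) =>
    (hasDerivAt_prod_update_pow z r (e s)).const_mul (c s)
  rw [zDc, hderiv.deriv, mul_sum]
  refine sum_congr rfl fun s _ => ?_
  rw [mul_left_comm, mul_deriv_prod_update_pow, mul_assoc]

lemma sum_zDc_zDc_sum_monomial {n : ℕ} {ι : Type*} [Fintype ι] (c : ι → ℂ)
    (e : ι → Fin n → ℕ) (κ : ℂ) (he : ∀ s, ∑ r, (e s r : ℂ) ^ 2 = κ) (z : Fin n → ℂ) :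
    ∑ r, zDc r (zDc r fun z => ∑ s, c s * ∏ j, z j ^ e s j) z
      = κ * ∑ s, c s * ∏ j, z j ^ e s j := by
  simp only [zDc_sum_monomial]
  rw [sum_comm, mul_sum]
  refine sum_congr rfl fun s _ => ?_
  rw [← he s]
  simp only [sum_mul]
  exact sum_congr rfl fun r _ => by ring

lemma prod_filter_lt_eq_prod_prod_Ioi {ι M : Type*} [Fintype ι] [LinearOrder ι]
    [LocallyFiniteOrderTop ι] [CommMonoid M] (f : ι → ι → M) :
    ∏ p ∈ univ.filter (fun p : ι × ι => p.1 < p.2), f p.1 p.2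
      = ∏ i, ∏ j ∈ Ioi i, f i j := by
  rw [prod_filter, Fintype.prod_prod_type]
  refine prod_congr rfl fun i _ => ?_
  rw [← prod_filter]
  congr 1
  ext j
  simp

lemma det_vandermonde_eq_sum_perm {n : ℕ} {R : Type*} [CommRing R] (v : Fin n → R) :
    (vandermonde v).det = ∑ σ : Perm (Fin n), (Perm.sign σ : R) * ∏ j, v j ^ (σ j : ℕ) := by
  rw [← det_transpose, det_apply]
  refine sum_congr rfl fun σ _ => ?_
  simp [Units.smul_def]

lemma vandermondeW_eq_sum_perm (n : ℕ) :
    vandermondeW n = fun z => ∑ σ : Perm (Fin n),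
      (-1) ^ #(univ.filter fun p : Fin n × Fin n => p.1 < p.2) * (Perm.sign σ : ℂ)
        * ∏ j, z j ^ (σ j : ℕ) := by
  funext z
  have hneg : vandermondeW n z = ∏ p ∈ univ.filter (fun p : Fin n × Fin n => p.1 < p.2),
      -(z p.2 - z p.1) := prod_congr rfl fun _ _ => (neg_sub _ _).symm
  rw [hneg, prod_neg, prod_filter_lt_eq_prod_prod_Ioi fun i j => z j - z i, ← det_vandermonde,
    det_vandermonde_eq_sum_perm, mul_sum]
  exact sum_congr rfl fun σ _ => by ring

lemma Nat.six_mul_sum_range_sq (n : ℕ) :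
    6 * ∑ i ∈ range n, i ^ 2 = (n - 1) * n * (2 * n - 1) := by
  induction n with
  | zero => simp
  | succ m ih =>
    rw [sum_range_succ, Nat.mul_add, ih]
    rcases m with _ | k
    · simp
    · rw [show 2 * (k + 1 + 1) - 1 = 2 * k + 3 by omega, show 2 * (k + 1) - 1 = 2 * k + 1 by omega]
      simp only [Nat.add_sub_cancel]
      ring

lemma sum_fin_natCast_sq (n : ℕ) :
    ∑ i : Fin n, ((i : ℕ) : ℂ) ^ 2 = (((n - 1) * n * (2 * n - 1) : ℕ) : ℂ) / 6 := by
  rw [← Nat.six_mul_sum_range_sq, Fin.sum_univ_eq_sum_range (fun k => (k : ℂ) ^ 2)]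
  push_cast
  ring

/-- `∑_i (z_i ∂_{z_i})² W = ((n-1)n(2n-1)/6) W`. -/
theorem vandermonde_euler_eq (n : ℕ) (z : Fin n → ℂ) :
    ∑ i : Fin n, zDc i (zDc i (vandermondeW n)) z
      = (((n - 1) * n * (2 * n - 1) : ℕ) : ℂ) / 6 * vandermondeW n z := by
  rw [vandermondeW_eq_sum_perm, ← sum_fin_natCast_sq]
  exact sum_zDc_zDc_sum_monomial _ (fun (σ : Perm (Fin n)) j => (σ j : ℕ)) _
    (fun σ => Equiv.sum_comp σ fun j => ((j : ℕ) : ℂ) ^ 2) z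
end

section
/- For n ≥ 1 and pairwise distinct nonzero complex z₁,…,zₙ with z_i z_j ≠ 1 for all i ≠ j, the function φ_μ^D = ∏_{1≤i<j≤n}(z_i + z_i⁻¹ - z_j - z_j⁻¹)^μ (for positive real arguments making bases positive) satisfies ∑_{r=1}^n (z_r∂_{z_r})²(φ_μ^D) + 2μ(1-μ)[∑_{i<j} z_iz_j/(z_i-z_j)² + ∑_{i<j} z_iz_j/(z_iz_j-1)²] φ_μ^D = (n(n-1)(2n-1)μ²/6) φ_μ^D. -/
/-!
Write `c_i = z_i + z_i⁻¹` and `a_i = z_i - z_i⁻¹`. Since `z ∂_z = a ∂_c` and `z ∂_z a = c`, on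
functions of `c` the operator `(z_r ∂_{z_r})²` is `c_r ∂_{c_r} + a_r² ∂_{c_r}²`, and
`φ = ∏_{i<j} (c_i - c_j)^μ` satisfies `∂_{c_r} φ = μ S_r φ`, `∂_{c_r}² φ = (μ² S_r² - μ Q_r) φ` with
`S_r = ∑_j (c_r - c_j)⁻¹` and `Q_r = ∑_j (c_r - c_j)⁻²` (the term `j = r` is `0⁻¹ = 0`).
The three resulting sums are evaluated by symmetrisation over pairs and triples of indices:
`∑_r c_r S_r = n(n-1)/2`; `∑_r a_r² (S_r² - Q_r) = n(n-1)(n-2)/3`, because `a² = c² - 4` and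
the cyclic sum of `(c_r² - 4)/((c_r - c_j)(c_r - c_k))` over distinct `r, j, k` is `1`
(Lagrange interpolation of a monic quadratic); and
`(a_i² + a_j²)/(c_i - c_j)² = 1 + 2 z_iz_j/(z_i - z_j)² + 2 z_iz_j/(z_iz_j - 1)²` turns
`(μ² - μ) ∑_r a_r² Q_r` into `(μ² - μ) n(n-1)/2` minus the potential term.
-/

/-- The operator `z_r ∂_{z_r}` on complex-valued functions of `n` real variables. -/
noncomputable def zDp {n : ℕ} (r : Fin n) (f : (Fin n → ℝ) → ℂ) : (Fin n → ℝ) → ℂ :=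
  fun z => (z r : ℂ) * deriv (fun t => f (Function.update z r t)) (z r)

/-- The power of the type D Weyl function:
`φ_μ^D(z) = ∏_{i<j} (z_i + z_i⁻¹ - z_j - z_j⁻¹)^μ`. -/
noncomputable def phiD (n : ℕ) (μ : ℂ) : (Fin n → ℝ) → ℂ :=
  fun z => ∏ p ∈ Finset.univ.filter (fun p : Fin n × Fin n => p.1 < p.2),
    ((z p.1 + (z p.1)⁻¹ - z p.2 - (z p.2)⁻¹ : ℝ) : ℂ) ^ μ

open Finset Function Filter Topology

section Pairs

variable {ι M : Type*} [Fintype ι] [LinearOrder ι] [AddCommMonoid M]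

theorem sum_sum_eq_sum_lt_add_swap (f : ι → ι → M) (hf : ∀ i, f i i = 0) :
    ∑ i, ∑ j, f i j = ∑ p : ι × ι with p.1 < p.2, (f p.1 p.2 + f p.2 p.1) := by
  have hsplit : ∀ i j, f i j = (if i < j then f i j else 0) + (if j < i then f i j else 0) := by
    intro i j
    rcases lt_trichotomy i j with h | rfl | h
    · simp [h, h.not_gt]
    · simp [hf]
    · simp [h, h.not_gt]
  calc ∑ i, ∑ j, f i j
      = ∑ i, ∑ j, (if i < j then f i j else 0) + ∑ i, ∑ j, (if j < i then f i j else 0) := by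
        simp_rw [← sum_add_distrib, ← hsplit]
    _ = ∑ i, ∑ j, (if i < j then f i j else 0) + ∑ i, ∑ j, (if i < j then f j i else 0) := by
        rw [sum_comm (f := fun i j => if j < i then f i j else 0)]
    _ = ∑ p : ι × ι with p.1 < p.2, (f p.1 p.2 + f p.2 p.1) := by
        simp_rw [← sum_add_distrib, ← ite_add_zero, sum_filter, Fintype.sum_prod_type]

theorem sum_lt_ite_add_ite (g : ι → M) (r : ι) (hg : g r = 0) :
    ∑ p : ι × ι with p.1 < p.2, ((if p.1 = r then g p.2 else 0) + (if p.2 = r then g p.1 else 0))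
      = ∑ j, g j := by
  rw [← sum_sum_eq_sum_lt_add_swap (fun i j => if i = r then g j else 0) (by simp [hg])]
  simp

end Pairs

section Algebra

variable {ι K : Type*} [Fintype ι] [Field K]

theorem sq_sum_sub_sum_sq [DecidableEq ι] (g : ι → K) :
    (∑ j, g j) ^ 2 - ∑ j, g j ^ 2 = ∑ j, ∑ k, if j = k then 0 else g j * g k := by
  have hdiag : ∀ j, g j ^ 2 = ∑ k, if j = k then g j * g k else 0 := by simp [sq]
  simp_rw [sq, sum_mul_sum, ← sq, hdiag, ← sum_sub_distrib]
  refine sum_congr rfl fun j _ => sum_congr rfl fun k _ => ?_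
  split_ifs <;> ring

theorem sum_sum_sum_rotate {M : Type*} [AddCommMonoid M] (T : ι → ι → ι → M) :
    ∑ i, ∑ j, ∑ k, T j k i = ∑ i, ∑ j, ∑ k, T i j k := by
  rw [sum_comm]
  exact sum_congr rfl fun _ _ => sum_comm

theorem sum_sum_sum_ite_distinct [DecidableEq ι] :
    ∑ i : ι, ∑ j : ι, ∑ k : ι, (if i ≠ j ∧ j ≠ k ∧ k ≠ i then 1 else 0 : K)
      = Fintype.card ι * ((Fintype.card ι : K) - 1) * ((Fintype.card ι : K) - 2) := by
  have hk : ∀ i j : ι, ∑ k : ι, (if i ≠ j ∧ j ≠ k ∧ k ≠ i then 1 else 0 : K)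
      = ((Fintype.card ι : K) - 2) - if i = j then (Fintype.card ι : K) - 2 else 0 := by
    intro i j
    by_cases h : i = j
    · simp [h]
    · have : ∀ k, (if i ≠ j ∧ j ≠ k ∧ k ≠ i then 1 else 0 : K)
          = 1 - (if j = k then 1 else 0) - (if k = i then 1 else 0) := by
        intro k; by_cases hj : j = k <;> by_cases hi : k = i <;> simp_all
      simp_rw [this, sum_sub_distrib]
      simp only [sum_const, card_univ, nsmul_eq_mul, mul_one, sum_ite_eq, mem_univ, ↓reduceIte,
        sum_ite_eq', h, sub_zero]
      ring
  simp_rw [hk, sum_sub_distrib]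
  simp only [sum_const, card_univ, nsmul_eq_mul, sum_ite_eq, mem_univ, ↓reduceIte]
  ring

theorem lagrange_cyclic (d a b c : K) (hab : a ≠ b) (hbc : b ≠ c) (hca : c ≠ a) :
    (a ^ 2 - d) * (a - b)⁻¹ * (a - c)⁻¹ + (b ^ 2 - d) * (b - c)⁻¹ * (b - a)⁻¹
      + (c ^ 2 - d) * (c - a)⁻¹ * (c - b)⁻¹ = 1 := by
  have := sub_ne_zero.2 hab; have := sub_ne_zero.2 hbc; have := sub_ne_zero.2 hca
  have := sub_ne_zero.2 hab.symm; have := sub_ne_zero.2 hbc.symm; have := sub_ne_zero.2 hca.symm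
  field_simp
  ring

theorem three_mul_sum_sq_sum_inv_sub {c : ι → K} (hc : Injective c) (d : K) :
    3 * ∑ r, (c r ^ 2 - d) * ((∑ j, (c r - c j)⁻¹) ^ 2 - ∑ j, (c r - c j)⁻¹ ^ 2)
      = Fintype.card ι * ((Fintype.card ι : K) - 1) * ((Fintype.card ι : K) - 2) := by
  classical
  set T : ι → ι → ι → K := fun r j k =>
    if j = k then 0 else (c r ^ 2 - d) * (c r - c j)⁻¹ * (c r - c k)⁻¹
  have hcyc : ∀ r j k, T r j k + T j k r + T k r j
      = if r ≠ j ∧ j ≠ k ∧ k ≠ r then 1 else 0 := by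
    intro r j k
    by_cases hrj : r = j
    · subst hrj; simp [T]
    by_cases hjk : j = k
    · subst hjk; simp [T]
    by_cases hkr : k = r
    · subst hkr; simp [T]
    simp only [T, if_neg hrj, if_neg hjk, if_neg hkr,
      if_pos (⟨hrj, hjk, hkr⟩ : r ≠ j ∧ j ≠ k ∧ k ≠ r)]
    exact lagrange_cyclic d _ _ _ (hc.ne hrj) (hc.ne hjk) (hc.ne hkr)
  calc 3 * ∑ r, (c r ^ 2 - d) * ((∑ j, (c r - c j)⁻¹) ^ 2 - ∑ j, (c r - c j)⁻¹ ^ 2)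
      = 3 * ∑ r, ∑ j, ∑ k, T r j k := by
        simp_rw [sq_sum_sub_sum_sq, mul_sum, T, mul_ite, mul_zero, mul_assoc]
    _ = ∑ r, ∑ j, ∑ k, (T r j k + T j k r + T k r j) := by
        have hrot := sum_sum_sum_rotate fun a b c => T c a b
        simp_rw [sum_add_distrib]
        rw [sum_sum_sum_rotate T, ← hrot]
        ring
    _ = _ := by simp_rw [hcyc, ← sum_sum_sum_ite_distinct]

theorem sub_inv_sq {x : K} (hx : x ≠ 0) : (x - x⁻¹) ^ 2 = (x + x⁻¹) ^ 2 - 4 := by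
  linear_combination (-4) * mul_inv_cancel₀ hx

theorem cast_mul_sub_one_mul_two_mul_sub_one {R : Type*} [CommRing R] (n : ℕ) :
    ((n * (n - 1) * (2 * n - 1) : ℕ) : R) = n * (n - 1) * (2 * n - 1) := by
  rcases n with _ | m
  · simp
  · rw [show 2 * (m + 1) - 1 = 2 * m + 1 by omega]
    push_cast
    ring

theorem add_inv_sub_add_inv {x y : K} (hx : x ≠ 0) (hy : y ≠ 0) :
    x + x⁻¹ - (y + y⁻¹) = (x - y) * (x * y - 1) / (x * y) := by
  field_simp
  ring

theorem sq_sub_inv_add_sq_sub_inv_mul_inv_sq {x y : K} (hx : x ≠ 0) (hy : y ≠ 0)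
    (hxy : x + x⁻¹ ≠ y + y⁻¹) :
    ((x - x⁻¹) ^ 2 + (y - y⁻¹) ^ 2) * (x + x⁻¹ - (y + y⁻¹))⁻¹ ^ 2
      = 1 + 2 * (x * y / (x - y) ^ 2 + x * y / (x * y - 1) ^ 2) := by
  have hne := sub_ne_zero.2 hxy
  rw [add_inv_sub_add_inv hx hy] at hne ⊢
  have hxy₁ : x - y ≠ 0 := fun h => hne (by simp [h])
  have hxy₂ : x * y - 1 ≠ 0 := fun h => hne (by simp [h])
  field_simp
  ring

variable [LinearOrder ι]

theorem sum_mul_sum_inv_sub {c : ι → K} (hc : Injective c) :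
    ∑ r, c r * ∑ j, (c r - c j)⁻¹ = #{p : ι × ι | p.1 < p.2} := by
  simp_rw [mul_sum]
  rw [sum_sum_eq_sum_lt_add_swap _ (by simp), card_eq_sum_ones, Nat.cast_sum, Nat.cast_one]
  refine sum_congr rfl fun p hp => ?_
  have hp := (mem_filter.1 hp).2
  have := sub_ne_zero.2 (hc.ne hp.ne)
  have := sub_ne_zero.2 (hc.ne hp.ne')
  field_simp
  ring

theorem sum_sq_sub_inv_mul_sum_inv_sub_sq {z : ι → K} (hz : ∀ i, z i ≠ 0)
    (hc : Injective fun i => z i + (z i)⁻¹) :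
    ∑ r, (z r - (z r)⁻¹) ^ 2 * ∑ j, (z r + (z r)⁻¹ - (z j + (z j)⁻¹))⁻¹ ^ 2
      = #{p : ι × ι | p.1 < p.2} + 2 * ∑ p : ι × ι with p.1 < p.2,
          (z p.1 * z p.2 / (z p.1 - z p.2) ^ 2 + z p.1 * z p.2 / (z p.1 * z p.2 - 1) ^ 2) := by
  simp_rw [mul_sum]
  rw [sum_sum_eq_sum_lt_add_swap _ (by simp), card_eq_sum_ones, Nat.cast_sum, Nat.cast_one,
    ← sum_add_distrib]
  refine sum_congr rfl fun p hp => ?_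
  rw [← sq_sub_inv_add_sq_sub_inv_mul_inv_sq (hz _) (hz _) (hc.ne (mem_filter.1 hp).2.ne),
    ← neg_sub (z p.1 + _), inv_neg, neg_sq]
  ring

end Algebra

section Calculus

theorem HasDerivAt.finsetProd_of_hasDerivAt_mul {ι 𝕜 𝔸 : Type*} [NontriviallyNormedField 𝕜]
    [NormedCommRing 𝔸] [NormedAlgebra 𝕜 𝔸] {u : Finset ι} {f : ι → 𝕜 → 𝔸} {c : ι → 𝔸} {x : 𝕜}
    (hf : ∀ i ∈ u, HasDerivAt (f i) (c i * f i x) x) :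
    HasDerivAt (fun y => ∏ i ∈ u, f i y) ((∑ i ∈ u, c i) * ∏ i ∈ u, f i x) x := by
  classical
  refine (HasDerivAt.fun_finsetProd hf).congr_deriv ?_
  rw [sum_mul]
  refine sum_congr rfl fun i hi => ?_
  rw [smul_eq_mul, mul_left_comm, prod_erase_mul u (fun j => f j x) hi]

theorem HasDerivAt.ofReal_cpow_const {b : ℝ → ℝ} {b' x : ℝ} (hb : HasDerivAt b b' x)
    (hpos : 0 < b x) (μ : ℂ) :
    HasDerivAt (fun y => (b y : ℂ) ^ μ) (μ * (b' / b x : ℝ) * (b x : ℂ) ^ μ) x := by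
  have hslit : (b x : ℂ) ∈ Complex.slitPlane := Complex.ofReal_mem_slitPlane.2 hpos
  have hne : (b x : ℂ) ≠ 0 := Complex.ofReal_ne_zero.2 hpos.ne'
  have h := (Complex.hasStrictDerivAt_cpow_const (c := μ) hslit).hasDerivAt.comp_ofReal.scomp x hb
  refine h.congr_deriv ?_
  rw [Complex.cpow_sub _ _ hne, Complex.cpow_one, Complex.real_smul]
  push_cast
  field_simp

theorem hasDerivAt_add_inv {s : ℝ} (hs : s ≠ 0) :
    HasDerivAt (fun u : ℝ => u + u⁻¹) (1 - (s ^ 2)⁻¹) s :=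
  ((hasDerivAt_id' s).fun_add (hasDerivAt_inv hs)).congr_deriv (by ring)

theorem euler_sq_comp_add_inv {G G' : ℝ → ℂ} {G'' : ℂ} {t : ℝ} (ht : t ≠ 0)
    (hG : ∀ᶠ x in 𝓝 (t + t⁻¹), HasDerivAt G (G' x) x) (hG' : HasDerivAt G' G'' (t + t⁻¹)) :
    (t : ℂ) * deriv (fun s : ℝ => (s : ℂ) * deriv (fun u => G (u + u⁻¹)) s) t
      = ((t + t⁻¹ : ℝ) : ℂ) * G' (t + t⁻¹) + ((t - t⁻¹ : ℝ) : ℂ) ^ 2 * G'' := by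
  have hfirst : (fun s : ℝ => (s : ℂ) * deriv (fun u => G (u + u⁻¹)) s)
      =ᶠ[𝓝 t] fun s => ((s - s⁻¹ : ℝ) : ℂ) * G' (s + s⁻¹) := by
    filter_upwards [(hasDerivAt_add_inv ht).continuousAt.eventually hG, eventually_ne_nhds ht]
      with s hs hs0
    have hd : HasDerivAt (fun u => G (u + u⁻¹)) _ s := hs.scomp s (hasDerivAt_add_inv hs0)
    rw [hd.deriv, Complex.real_smul]
    generalize G' (s + s⁻¹) = g
    have : (s : ℂ) ≠ 0 := Complex.ofReal_ne_zero.2 hs0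
    push_cast
    field_simp
  have hsecond : HasDerivAt (fun s => ((s - s⁻¹ : ℝ) : ℂ) * G' (s + s⁻¹)) _ t :=
    ((hasDerivAt_id' t).fun_sub (hasDerivAt_inv ht)).ofReal_comp.fun_mul
      (hG'.scomp t (hasDerivAt_add_inv ht))
  rw [hfirst.deriv_eq, hsecond.deriv, Complex.real_smul]
  generalize G' (t + t⁻¹) = g
  have : (t : ℂ) ≠ 0 := Complex.ofReal_ne_zero.2 ht
  push_cast
  field_simp
  ring

theorem isOpen_setOf_strictAnti {ι α : Type*} [Finite ι] [Preorder ι] [LinearOrder α]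
    [TopologicalSpace α] [OrderClosedTopology α] : IsOpen {w : ι → α | StrictAnti w} := by
  simp only [StrictAnti, Set.ofPred_forall]
  refine isOpen_iInter_of_finite fun i => isOpen_iInter_of_finite fun j => ?_
  by_cases h : i < j
  · simpa [h] using isOpen_lt (continuous_apply j) (continuous_apply i)
  · simp [h]

theorem eventually_strictAnti_update {ι : Type*} [Finite ι] [Preorder ι] [DecidableEq ι]
    {w : ι → ℝ} (hw : StrictAnti w) (r : ι) :
    ∀ᶠ x in 𝓝 (w r), StrictAnti (update w r x) := by
  have hcont : Continuous (update w r) := continuous_const.update r continuous_id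
  refine hcont.continuousAt.eventually_mem (s := {w | StrictAnti w}) ?_
  rw [update_eq_self]
  exact isOpen_setOf_strictAnti.mem_nhds hw

theorem hasDerivAt_sum_inv_sub_update {ι : Type*} [Fintype ι] [DecidableEq ι] {w : ι → ℝ}
    (hw : Injective w) (r : ι) :
    HasDerivAt (fun x => ∑ j, (update w r x r - update w r x j)⁻¹)
      (-∑ j, (w r - w j)⁻¹ ^ 2) (w r) := by
  simp only [update_self, ← sum_neg_distrib]
  refine HasDerivAt.fun_sum fun j _ => ?_
  by_cases hj : j = r
  · subst hj; simpa using hasDerivAt_const (w j) (0 : ℝ)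
  · simp only [update_of_ne hj]
    have := (hasDerivAt_inv (sub_ne_zero.2 (hw.ne (Ne.symm hj)))).comp (w r)
      ((hasDerivAt_id (w r)).sub_const (w j))
    rw [mul_one, ← inv_pow] at this
    exact this

end Calculus

section Vandermonde

variable {ι : Type*} [Fintype ι] [LinearOrder ι]

noncomputable def vandermondePow (μ : ℂ) (w : ι → ℝ) : ℂ :=
  ∏ p : ι × ι with p.1 < p.2, ((w p.1 - w p.2 : ℝ) : ℂ) ^ μ

theorem hasDerivAt_vandermondePow_update (μ : ℂ) {w : ι → ℝ} (hw : StrictAnti w) (r : ι) :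
    HasDerivAt (fun x => vandermondePow μ (update w r x))
      (μ * ((∑ j, (w r - w j)⁻¹ : ℝ) : ℂ) * vandermondePow μ w) (w r) := by
  have hfactor : ∀ p ∈ ({p : ι × ι | p.1 < p.2} : Finset _),
      HasDerivAt (fun x => ((update w r x p.1 - update w r x p.2 : ℝ) : ℂ) ^ μ)
        (μ * ((if p.1 = r then (w r - w p.2)⁻¹ else 0)
            + (if p.2 = r then (w r - w p.1)⁻¹ else 0) : ℝ)
          * ((update w r (w r) p.1 - update w r (w r) p.2 : ℝ) : ℂ) ^ μ) (w r) := by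
    intro p hp
    have hlt := (mem_filter.1 hp).2
    have hb := ((hasDerivAt_pi.1 (hasDerivAt_update w r (w r))) p.1).fun_sub
      ((hasDerivAt_pi.1 (hasDerivAt_update w r (w r))) p.2)
    refine (hb.ofReal_cpow_const (by simpa using sub_pos.2 (hw hlt)) μ).congr_deriv ?_
    simp only [update_eq_self, Pi.single_apply]
    by_cases h1 : p.1 = r <;> by_cases h2 : p.2 = r
    · exact absurd (h1.trans h2.symm) hlt.ne
    · subst h1; simp [h2]
    · subst h2; simp [h1, neg_div, ← inv_neg]
    · simp [h1, h2]
  have := HasDerivAt.finsetProd_of_hasDerivAt_mul hfactor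
  simp only [update_eq_self, ← mul_sum, ← Complex.ofReal_sum] at this
  rwa [sum_lt_ite_add_ite (fun j => (w r - w j)⁻¹) r (by simp)] at this

theorem eventually_hasDerivAt_vandermondePow_update (μ : ℂ) {w : ι → ℝ} (hw : StrictAnti w)
    (r : ι) :
    ∀ᶠ x in 𝓝 (w r), HasDerivAt (fun y => vandermondePow μ (update w r y))
      (μ * ((∑ j, (update w r x r - update w r x j)⁻¹ : ℝ) : ℂ)
        * vandermondePow μ (update w r x)) x := by
  filter_upwards [eventually_strictAnti_update hw r] with x hx
  simpa using hasDerivAt_vandermondePow_update μ hx r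

theorem hasDerivAt_mul_vandermondePow_update (μ : ℂ) {w : ι → ℝ} (hw : StrictAnti w) (r : ι) :
    HasDerivAt (fun x => μ * ((∑ j, (update w r x r - update w r x j)⁻¹ : ℝ) : ℂ)
        * vandermondePow μ (update w r x))
      ((μ ^ 2 * ((∑ j, (w r - w j)⁻¹ : ℝ) : ℂ) ^ 2 - μ * ((∑ j, (w r - w j)⁻¹ ^ 2 : ℝ) : ℂ))
        * vandermondePow μ w) (w r) := by
  have := ((hasDerivAt_sum_inv_sub_update hw.injective r).ofReal_comp.const_mul μ).fun_mul
    (hasDerivAt_vandermondePow_update μ hw r)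
  refine this.congr_deriv ?_
  simp only [update_self, update_eq_self]
  push_cast
  ring

end Vandermonde

theorem phiD_eq_vandermondePow (n : ℕ) (μ : ℂ) (z : Fin n → ℝ) :
    phiD n μ z = vandermondePow μ (fun i => z i + (z i)⁻¹) := by
  simp only [phiD, vandermondePow, sub_sub]

theorem zDp_zDp_apply {n : ℕ} (r : Fin n) (f : (Fin n → ℝ) → ℂ) (z : Fin n → ℝ) :
    zDp r (zDp r f) z
      = z r * deriv (fun t : ℝ => (t : ℂ) * deriv (fun s => f (update z r s)) t) (z r) := by
  simp [zDp, update_idem]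

theorem zDp_zDp_phiD {n : ℕ} (μ : ℂ) {z : Fin n → ℝ} (r : Fin n) (hz : z r ≠ 0)
    (hc : StrictAnti fun i => z i + (z i)⁻¹) :
    zDp r (zDp r (phiD n μ)) z =
      (μ * ((z r + (z r)⁻¹) * ∑ j, (z r + (z r)⁻¹ - (z j + (z j)⁻¹))⁻¹ : ℝ)
        + μ ^ 2 * ((z r - (z r)⁻¹) ^ 2 * ((∑ j, (z r + (z r)⁻¹ - (z j + (z j)⁻¹))⁻¹) ^ 2
            - ∑ j, (z r + (z r)⁻¹ - (z j + (z j)⁻¹))⁻¹ ^ 2) : ℝ)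
        + (μ ^ 2 - μ) * ((z r - (z r)⁻¹) ^ 2 * ∑ j, (z r + (z r)⁻¹ - (z j + (z j)⁻¹))⁻¹ ^ 2 : ℝ))
        * phiD n μ z := by
  have hline : (fun s => phiD n μ (update z r s))
      = fun s => vandermondePow μ (update (fun i => z i + (z i)⁻¹) r (s + s⁻¹)) := by
    funext s
    rw [phiD_eq_vandermondePow]
    exact congrArg _ (comp_update (fun x : ℝ => x + x⁻¹) z r s)
  rw [zDp_zDp_apply, hline, euler_sq_comp_add_inv hz
    (eventually_hasDerivAt_vandermondePow_update μ hc r)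
    (hasDerivAt_mul_vandermondePow_update μ hc r), phiD_eq_vandermondePow]
  simp only [update_self, update_eq_self]
  push_cast
  ring

theorem phiD_olshanesky_perelomov_general (n : ℕ) (μ : ℂ) (z : Fin n → ℝ)
    (hpos : ∀ r, 0 < z r)
    (hbase : ∀ i j : Fin n, i < j → 0 < z i + (z i)⁻¹ - z j - (z j)⁻¹) :
    ∑ r : Fin n, zDp r (zDp r (phiD n μ)) z
      + 2 * μ * (1 - μ) *
        ((∑ p ∈ Finset.univ.filter (fun p : Fin n × Fin n => p.1 < p.2),
            (z p.1 * z p.2 / (z p.1 - z p.2) ^ 2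
              + z p.1 * z p.2 / (z p.1 * z p.2 - 1) ^ 2) : ℝ) : ℂ)
        * phiD n μ z
    = ((n * (n - 1) * (2 * n - 1) : ℕ) : ℂ) * μ ^ 2 / 6 * phiD n μ z := by
  have hz : ∀ r, z r ≠ 0 := fun r => (hpos r).ne'
  have hc : StrictAnti fun i => z i + (z i)⁻¹ := fun i j hij => by linarith [hbase i j hij]
  have ha : ∀ r, (z r - (z r)⁻¹) ^ 2 = (z r + (z r)⁻¹) ^ 2 - 4 := fun r => sub_inv_sq (hz r)
  have hB := three_mul_sum_sq_sum_inv_sub hc.injective 4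
  rw [sum_congr rfl fun r _ => zDp_zDp_phiD μ r (hz r) hc, ← sum_mul, sum_add_distrib,
    sum_add_distrib, ← mul_sum, ← mul_sum, ← mul_sum, ← Complex.ofReal_sum, ← Complex.ofReal_sum,
    ← Complex.ofReal_sum, sum_mul_sum_inv_sub hc.injective,
    sum_sq_sub_inv_mul_sum_inv_sub_sq hz hc.injective]
  simp only [ha]
  rw [eq_div_of_mul_eq three_ne_zero ((mul_comm _ _).trans hB), Fintype.card_product_filter_lt,
    Fintype.card_fin, cast_mul_sub_one_mul_two_mul_sub_one]
  push_cast [Nat.cast_choose_two]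
  ring

/-- `φ_μ^D` satisfies the Olshanesky–Perelomov equation of type D:
`∑_r (z_r∂_{z_r})² φ + 2μ(1-μ)[∑_{i<j} z_iz_j/(z_i-z_j)² + z_iz_j/(z_iz_j-1)²] φ
  = (n(n-1)(2n-1)μ²/6) φ`. -/
theorem phiD_olshanesky_perelomov (n : ℕ) (hn : 1 ≤ n) (μ : ℂ) (z : Fin n → ℝ)
    (hpos : ∀ r, 0 < z r)
    (hdist : ∀ i j : Fin n, i ≠ j → z i ≠ z j)
    (hone : ∀ i j : Fin n, i ≠ j → z i * z j ≠ 1)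
    (hbase : ∀ i j : Fin n, i < j → 0 < z i + (z i)⁻¹ - z j - (z j)⁻¹) :
    ∑ r : Fin n, zDp r (zDp r (phiD n μ)) z
      + 2 * μ * (1 - μ) *
        ((∑ p ∈ Finset.univ.filter (fun p : Fin n × Fin n => p.1 < p.2),
            (z p.1 * z p.2 / (z p.1 - z p.2) ^ 2
              + z p.1 * z p.2 / (z p.1 * z p.2 - 1) ^ 2) : ℝ) : ℂ)
        * phiD n μ z
    = ((n * (n - 1) * (2 * n - 1) : ℕ) : ℂ) * μ ^ 2 / 6 * phiD n μ z :=
  phiD_olshanesky_perelomov_general n μ z hpos hbase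
end

section
/- Let n ≥ 1 and let L be the n×n lower unitriangular matrix with entries L_{i,j} = z_{i,j} for i > j, 1 on the diagonal, 0 above. Define path polynomials P_{[k₁,k₂]} = ∑_{(m₀,…,m_r) path from k₁ to k₂} (-1)^r z_{m₁,m₀} z_{m₂,m₁} ⋯ z_{m_r,m_{r-1}}, where a path is a strictly increasing sequence k₁ = m₀ < m₁ < ⋯ < m_r = k₂, and P_{[k,k]} = 1. Then the inverse matrix L⁻¹ is lower unitriangular with (i,j)-entry P_{[j,i]} for i > j. -/
/-- The product `z_{m₁,m₀} z_{m₂,m₁} ⋯ z_{m_r,m_{r-1}}` along a path `l = [m₀,m₁,…,m_r]`. -/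
def chainProd {R : Type*} [CommRing R] (z : ℕ → ℕ → R) (l : List ℕ) : R :=
  (List.zipWith (fun a b => z b a) l l.tail).prod

/-- The path polynomial `P_{[j,i]} = ∑_{paths j=m₀<m₁<⋯<m_r=i} (-1)^r z_{m₁,m₀}⋯z_{m_r,m_{r-1}}`,
with `P_{[k,k]} = 1`.  A path from `j` to `i` is determined by its set `S ⊆ (j,i)` of
intermediate points; the associated path is the sorted list `j :: S ++ [i]`, which has
`S.card + 1` steps. -/
def pathPoly {R : Type*} [CommRing R] (z : ℕ → ℕ → R) (j i : ℕ) : R :=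
  if j = i then 1
  else ∑ S ∈ (Finset.Ioo j i).powerset,
    (-1 : R) ^ (S.card + 1) * chainProd z (j :: (S.sort (· ≤ ·) ++ [i]))

/-!
For square matrices over a commutative ring a one-sided inverse is two-sided, so it suffices to
show `M * L = 1`. The `(i, j)` entry of `M * L` is `P_{[j,i]} + ∑_{j<k≤i} P_{[k,i]} z_{k,j}`, and it
vanishes because sorting the paths from `j` to `i` by their first step `j → k` gives
`P_{[j,i]} = -∑_{j<k≤i} z_{k,j} P_{[k,i]}`. Adding intermediate vertices one at a time, from
the largest down, turns this first-step decomposition into an induction.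
-/

open Finset

section PathSum

variable {R : Type*} [CommRing R] (z : ℕ → ℕ → R)

def pathSum (j : ℕ) (A : Finset ℕ) (i : ℕ) : R :=
  ∑ S ∈ A.powerset, (-1 : R) ^ (S.card + 1) * chainProd z (j :: (S.sort (· ≤ ·) ++ [i]))

lemma pathPoly_self (i : ℕ) : pathPoly z i i = 1 := if_pos rfl

lemma pathPoly_of_ne {j i : ℕ} (h : j ≠ i) : pathPoly z j i = pathSum z j (Ioo j i) i :=
  if_neg h

lemma chainProd_cons_cons (a b : ℕ) (l : List ℕ) :
    chainProd z (a :: b :: l) = z b a * chainProd z (b :: l) := rfl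

lemma pathSum_empty (j i : ℕ) : pathSum z j ∅ i = -z i j := by
  simp [pathSum, chainProd]

lemma pathSum_insert_of_forall_lt {a : ℕ} {A : Finset ℕ} (ha : ∀ x ∈ A, a < x) (j i : ℕ) :
    pathSum z j (insert a A) i = pathSum z j A i - z a j * pathSum z a A i := by
  have haA : a ∉ A := fun h => (ha a h).false
  rw [pathSum, sum_powerset_insert haA, sub_eq_add_neg, neg_mul_eq_neg_mul, pathSum, pathSum,
    mul_sum]
  congr 1
  refine sum_congr rfl fun S hS => ?_
  have hSA := mem_powerset.1 hS
  rw [card_insert_of_notMem (fun h => haA (hSA h)),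
    sort_insert _ (fun x hx => (ha x (hSA hx)).le) (fun h => haA (hSA h)), List.cons_append,
    chainProd_cons_cons]
  ring

lemma pathSum_Ico {k i : ℕ} (hk : k ≤ i) (j : ℕ) :
    pathSum z j (Ico k i) i = -∑ m ∈ Icc k i, z m j * pathPoly z m i := by
  induction hk using Nat.decreasingInduction with
  | self => simp [pathSum_empty, pathPoly_self]
  | of_succ k hki ih =>
    rw [← insert_Ico_add_one_left_eq_Ico hki,
      pathSum_insert_of_forall_lt z (A := Ico (k + 1) i) (fun x hx => (mem_Ico.1 hx).1), ih,
      ← insert_Icc_add_one_left_eq_Icc hki.le, sum_insert (by simp), pathPoly_of_ne z hki.ne,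
      ← Ico_add_one_left_eq_Ioo]
    ring

lemma pathPoly_eq_neg_sum {j i : ℕ} (h : j < i) :
    pathPoly z j i = -∑ k ∈ Ioc j i, z k j * pathPoly z k i := by
  rw [pathPoly_of_ne z h.ne, ← Ico_add_one_left_eq_Ioo, pathSum_Ico z (show j + 1 ≤ i from h),
    Icc_add_one_left_eq_Ioc]

lemma sum_Icc_pathPoly_mul (j i : ℕ) :
    ∑ k ∈ Icc j i, pathPoly z k i * (if k = j then 1 else z k j) = if j = i then 1 else 0 := by
  rcases lt_trichotomy j i with h | rfl | h
  · have hsum : ∑ k ∈ Ioc j i, pathPoly z k i * (if k = j then 1 else z k j)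
        = ∑ k ∈ Ioc j i, z k j * pathPoly z k i :=
      sum_congr rfl fun k hk => by rw [if_neg (mem_Ioc.1 hk).1.ne', mul_comm]
    rw [← Ioc_insert_left h.le, sum_insert left_notMem_Ioc, if_pos rfl, mul_one, hsum,
      pathPoly_eq_neg_sum z h, neg_add_cancel, if_neg h.ne]
  · simp [pathPoly_self]
  · simp [Icc_eq_empty_of_lt h, h.ne']

end PathSum

theorem unitriangular_inverse_pathPoly_general {R : Type*} [CommRing R] (n : ℕ)
    (z : ℕ → ℕ → R) (L M : Matrix (Fin n) (Fin n) R)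
    (hL : ∀ i j : Fin n,
      L i j = if (i : ℕ) = j then 1 else if (j : ℕ) < i then z i j else 0)
    (hM : ∀ i j : Fin n,
      M i j = if (i : ℕ) = j then 1 else if (j : ℕ) < i then pathPoly z j i else 0) :
    L * M = 1 ∧ M * L = 1 := by
  have hML : M * L = 1 := by
    ext i j
    have hterm : ∀ k : Fin n, M i k * L k j = if (k : ℕ) ∈ Icc (j : ℕ) i then
        pathPoly z k i * (if (k : ℕ) = j then 1 else z k j) else 0 := by
      intro k
      simp only [hM, hL, mem_Icc]
      split_ifs <;> simp_all [pathPoly_self] <;> omega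
    have hIcc : Icc (j : ℕ) i ⊆ range n := fun k hk => mem_range.2 ((mem_Icc.1 hk).2.trans_lt i.2)
    rw [Matrix.mul_apply, sum_congr rfl fun k _ => hterm k,
      Fin.sum_univ_eq_sum_range (fun k => if k ∈ Icc (j : ℕ) i then
        pathPoly z k i * (if k = j then 1 else z k j) else 0), sum_ite_mem, inter_eq_right.2 hIcc,
      sum_Icc_pathPoly_mul, Matrix.one_apply]
    simp only [Fin.ext_iff, eq_comm]
  exact ⟨mul_eq_one_comm.1 hML, hML⟩

/-- If `L` is lower unitriangular with subdiagonal entries `z_{i,j}`, then its inverse is the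
lower unitriangular matrix whose `(i,j)` entry (`i > j`) is the path polynomial `P_{[j,i]}`. -/
theorem unitriangular_inverse_pathPoly {R : Type*} [CommRing R] (n : ℕ) (hn : 1 ≤ n)
    (z : ℕ → ℕ → R) (L M : Matrix (Fin n) (Fin n) R)
    (hL : ∀ i j : Fin n,
      L i j = if (i : ℕ) = j then 1 else if (j : ℕ) < i then z i j else 0)
    (hM : ∀ i j : Fin n,
      M i j = if (i : ℕ) = j then 1 else if (j : ℕ) < i then pathPoly z j i else 0) :
    L * M = 1 ∧ M * L = 1 :=
  unitriangular_inverse_pathPoly_general n z L M hL hM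
end

section
/- For n ≥ 1 and pairwise distinct reals z₁ > z₂ > ⋯ > zₙ > 0 and μ₁, μ₂ ∈ ℝ, the function φ^A = (z₁⋯zₙ)^{μ₁} ∏_{1≤i<j≤n}(z_i - z_j)^{μ₂} satisfies ∑_{r=1}^n (z_r∂_{z_r})²(φ^A) + 2μ₂(1-μ₂)(∑_{1≤i<j≤n} z_iz_j/(z_i-z_j)²) φ^A = [nμ₁² + n(n-1)(μ₁ + μ₂/2)μ₂ + 2 (n choose 3) μ₂²] φ^A. -/
/-!
On the chamber `z₁ > ⋯ > zₙ > 0`, `log φ^A = μ₁ ∑ log z_r + μ₂ ∑_{i<j} log (z_i - z_j)`, so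
`z_r ∂_{z_r} φ^A = W_r φ^A` with `W_r = μ₁ + μ₂ T_r`, `T_r = ∑_{s ≠ r} z_r / (z_r - z_s)`. Hence
`(z_r ∂_{z_r})² φ^A = (W_r² + z_r ∂_{z_r} W_r) φ^A` with
`z_r ∂_{z_r} W_r = -μ₂ ∑_{s ≠ r} z_r z_s / (z_r - z_s)²`. Summing over `r` leaves a rational
function that is in fact constant. Pairing `(r, s)` with `(s, r)` gives `∑_r T_r = (n choose 2)` and
`∑_{r ≠ s} (z_r / (z_r - z_s))² = (n choose 2) + 2 ∑_{i<j} z_i z_j / (z_i - z_j)²`; the cross terms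
of `∑_r T_r²` run over distinct triples, on which the cyclic sum of
`z_r² / ((z_r - z_s) (z_r - z_t))` is `1` (Lagrange interpolation of `x²`), so they add up to
`2 (n choose 3)`.
-/

/-- The operator `z_r ∂_{z_r}` on real-valued functions of `n` real variables. -/
noncomputable def zDr {n : ℕ} (r : Fin n) (f : (Fin n → ℝ) → ℝ) : (Fin n → ℝ) → ℝ :=
  fun z => z r * deriv (fun t => f (Function.update z r t)) (z r)

/-- `φ^A(z) = (z₁⋯zₙ)^{μ₁} ∏_{i<j} (z_i - z_j)^{μ₂}` (real powers). -/
noncomputable def phiA (n : ℕ) (μ₁ μ₂ : ℝ) : (Fin n → ℝ) → ℝ :=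
  fun z => (∏ r : Fin n, z r) ^ μ₁ *
    ∏ p ∈ Finset.univ.filter (fun p : Fin n × Fin n => p.1 < p.2),
      (z p.1 - z p.2) ^ μ₂

open Finset Function Filter Topology

section Combinatorics

variable {ι M : Type*} [AddCommMonoid M]

theorem Finset.sum_sum_erase_eq_sum_offDiag [DecidableEq ι] (s : Finset ι) (f : ι → ι → M) :
    ∑ i ∈ s, ∑ j ∈ s.erase i, f i j = ∑ p ∈ s.offDiag, f p.1 p.2 :=
  (sum_finset_product' _ _ _ fun p => by grind).symm

theorem Finset.sq_sum_eq_sum_sq_add_sum_sum_erase [DecidableEq ι] {R : Type*} [CommSemiring R]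
    (s : Finset ι) (f : ι → R) :
    (∑ i ∈ s, f i) ^ 2 = ∑ i ∈ s, f i ^ 2 + ∑ i ∈ s, ∑ j ∈ s.erase i, f i * f j := by
  rw [sq, sum_mul_sum, ← sum_add_distrib]
  exact sum_congr rfl fun i hi => by rw [sq, add_sum_erase _ (fun j => f i * f j) hi]

variable [Fintype ι]

theorem sum_filter_lt_add_swap [LinearOrder ι] (f : ι → ι → M) :
    ∑ p ∈ univ.filter (fun p : ι × ι => p.1 < p.2), (f p.1 p.2 + f p.2 p.1)
      = ∑ r, ∑ s ∈ univ.erase r, f r s := by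
  rw [sum_sum_erase_eq_sum_offDiag, sum_add_distrib,
    ← sum_filter_add_sum_filter_not univ.offDiag (fun p : ι × ι => p.1 < p.2)]
  congr 1
  · exact sum_congr (by ext; grind) fun _ _ => rfl
  · exact sum_nbij' Prod.swap Prod.swap (by grind) (by grind) (by simp) (by simp) (by simp)

variable [DecidableEq ι]

def distinctTriples (ι : Type*) [Fintype ι] [DecidableEq ι] : Finset (ι × ι × ι) :=
  univ.filter fun x => x.1 ≠ x.2.1 ∧ x.1 ≠ x.2.2 ∧ x.2.1 ≠ x.2.2

theorem sum_distinctTriples (F : ι × ι × ι → M) :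
    ∑ x ∈ distinctTriples ι, F x
      = ∑ r, ∑ s ∈ univ.erase r, ∑ t ∈ (univ.erase r).erase s, F (r, s, t) := by
  simp_rw [sum_sum_erase_eq_sum_offDiag]
  exact sum_finset_product _ _ _ fun x => by grind [distinctTriples]

theorem card_distinctTriples : #(distinctTriples ι) = (Fintype.card ι).descFactorial 3 := by
  rw [card_eq_sum_ones, sum_distinctTriples]
  have h : ∀ r : ι, ∀ s ∈ univ.erase r, ∑ t ∈ (univ.erase r).erase s, 1 = Fintype.card ι - 2 := by
    intro r s hs
    rw [← card_eq_sum_ones, card_erase_of_mem hs, card_erase_of_mem (mem_univ r), card_univ,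
      Nat.sub_sub]
  rw [sum_congr rfl fun r _ => sum_congr rfl (h r)]
  simp only [sum_const, card_erase_of_mem (mem_univ _), card_univ, smul_eq_mul,
    Nat.descFactorial_succ, Nat.descFactorial_zero, Nat.sub_zero]
  ring

theorem sum_distinctTriples_swap₁₂ (F : ι × ι × ι → M) :
    ∑ x ∈ distinctTriples ι, F (x.2.1, x.1, x.2.2) = ∑ x ∈ distinctTriples ι, F x :=
  sum_nbij' (fun x => (x.2.1, x.1, x.2.2)) (fun x => (x.2.1, x.1, x.2.2))
    (by grind [distinctTriples]) (by grind [distinctTriples])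
    (by simp) (by simp) (by simp)

theorem sum_distinctTriples_swap₁₃ (F : ι × ι × ι → M) :
    ∑ x ∈ distinctTriples ι, F (x.2.2, x.2.1, x.1) = ∑ x ∈ distinctTriples ι, F x :=
  sum_nbij' (fun x => (x.2.2, x.2.1, x.1)) (fun x => (x.2.2, x.2.1, x.1))
    (by grind [distinctTriples]) (by grind [distinctTriples]) (by simp) (by simp) (by simp)

end Combinatorics

section Algebra

theorem div_sub_add_div_sub {a b : ℝ} (h : a ≠ b) : a / (a - b) + b / (b - a) = 1 := by
  have := sub_ne_zero.2 h
  have := sub_ne_zero.2 h.symm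
  field_simp
  ring

theorem div_sub_sq_add_div_sub_sq {a b : ℝ} (h : a ≠ b) :
    (a / (a - b)) ^ 2 + (b / (b - a)) ^ 2 = 1 + 2 * (a * b / (a - b) ^ 2) := by
  have := sub_ne_zero.2 h
  have := sub_ne_zero.2 h.symm
  field_simp
  ring

theorem div_sub_mul_div_sub_add_cyclic {a b c : ℝ} (hab : a ≠ b) (hac : a ≠ c) (hbc : b ≠ c) :
    a / (a - b) * (a / (a - c)) + b / (b - a) * (b / (b - c)) + c / (c - b) * (c / (c - a))
      = 1 := by
  have := sub_ne_zero.2 hab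
  have := sub_ne_zero.2 hac
  have := sub_ne_zero.2 hbc
  have := sub_ne_zero.2 hab.symm
  have := sub_ne_zero.2 hac.symm
  have := sub_ne_zero.2 hbc.symm
  field_simp
  ring

variable {ι : Type*} [Fintype ι] {z : ι → ℝ}

theorem sum_distinctTriples_div_sub_mul [DecidableEq ι] (hz : Injective z) :
    ∑ x ∈ distinctTriples ι, z x.1 / (z x.1 - z x.2.1) * (z x.1 / (z x.1 - z x.2.2))
      = 2 * (Fintype.card ι).choose 3 := by
  set F : ι × ι × ι → ℝ := fun x => z x.1 / (z x.1 - z x.2.1) * (z x.1 / (z x.1 - z x.2.2))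
  have h3 : 3 * ∑ x ∈ distinctTriples ι, F x = #(distinctTriples ι) := by
    rw [card_eq_sum_ones, Nat.cast_sum, Nat.cast_one]
    calc 3 * ∑ x ∈ distinctTriples ι, F x
        = ∑ x ∈ distinctTriples ι, (F x + F (x.2.1, x.1, x.2.2) + F (x.2.2, x.2.1, x.1)) := by
          rw [sum_add_distrib, sum_add_distrib, sum_distinctTriples_swap₁₂,
            sum_distinctTriples_swap₁₃]
          ring
      _ = ∑ x ∈ distinctTriples ι, 1 := sum_congr rfl fun x hx => by
          simp only [distinctTriples, mem_filter] at hx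
          exact div_sub_mul_div_sub_add_cyclic (hz.ne hx.2.1) (hz.ne hx.2.2.1) (hz.ne hx.2.2.2)
  rw [card_distinctTriples, Nat.descFactorial_eq_factorial_mul_choose] at h3
  norm_num [Nat.factorial] at h3
  linarith

variable [LinearOrder ι]

theorem sum_sum_erase_div_sub (hz : Injective z) :
    ∑ r, ∑ s ∈ univ.erase r, z r / (z r - z s) = (Fintype.card ι).choose 2 := by
  rw [← sum_filter_lt_add_swap, ← Fintype.card_product_filter_lt, card_eq_sum_ones, Nat.cast_sum,
    Nat.cast_one]
  exact sum_congr rfl fun p hp => div_sub_add_div_sub (hz.ne (mem_filter.1 hp).2.ne)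

theorem sum_sum_erase_div_sub_sq (hz : Injective z) :
    ∑ r, ∑ s ∈ univ.erase r, (z r / (z r - z s)) ^ 2
      = (Fintype.card ι).choose 2 + 2 * ∑ p ∈ univ.filter (fun p : ι × ι => p.1 < p.2),
          z p.1 * z p.2 / (z p.1 - z p.2) ^ 2 := by
  rw [← sum_filter_lt_add_swap, ← Fintype.card_product_filter_lt, card_eq_sum_ones, Nat.cast_sum,
    Nat.cast_one, mul_sum, ← sum_add_distrib]
  exact sum_congr rfl fun p hp => div_sub_sq_add_div_sub_sq (hz.ne (mem_filter.1 hp).2.ne)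

theorem sum_sq_sum_erase_div_sub (hz : Injective z) :
    ∑ r, (∑ s ∈ univ.erase r, z r / (z r - z s)) ^ 2
      = (Fintype.card ι).choose 2 + 2 * ∑ p ∈ univ.filter (fun p : ι × ι => p.1 < p.2),
          z p.1 * z p.2 / (z p.1 - z p.2) ^ 2 + 2 * (Fintype.card ι).choose 3 := by
  simp only [sq_sum_eq_sum_sq_add_sum_sum_erase, sum_add_distrib]
  rw [sum_sum_erase_div_sub_sq hz, ← sum_distinctTriples_div_sub_mul hz, sum_distinctTriples]

theorem sum_sum_erase_mul_div_sub_sq :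
    ∑ r, ∑ s ∈ univ.erase r, z r * z s / (z r - z s) ^ 2
      = 2 * ∑ p ∈ univ.filter (fun p : ι × ι => p.1 < p.2),
          z p.1 * z p.2 / (z p.1 - z p.2) ^ 2 := by
  rw [← sum_filter_lt_add_swap, mul_sum]
  exact sum_congr rfl fun p _ => by rw [mul_comm (z p.2), ← neg_sub (z p.1), neg_sq, two_mul]

theorem calogero_sum_identity (hz : Injective z) (μ₁ μ₂ : ℝ) :
    ∑ r, ((μ₁ + μ₂ * ∑ s ∈ univ.erase r, z r / (z r - z s)) ^ 2
        - μ₂ * ∑ s ∈ univ.erase r, z r * z s / (z r - z s) ^ 2)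
      + 2 * μ₂ * (1 - μ₂) *
          ∑ p ∈ univ.filter (fun p : ι × ι => p.1 < p.2), z p.1 * z p.2 / (z p.1 - z p.2) ^ 2
    = (Fintype.card ι : ℝ) * μ₁ ^ 2 + Fintype.card ι * (Fintype.card ι - 1) * (μ₁ + μ₂ / 2) * μ₂
        + 2 * ((Fintype.card ι).choose 3 : ℝ) * μ₂ ^ 2 := by
  have hT := sum_sum_erase_div_sub hz
  have hT2 := sum_sq_sum_erase_div_sub hz
  have hD := sum_sum_erase_mul_div_sub_sq (z := z)
  have hC := Nat.cast_choose_two ℝ (Fintype.card ι)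
  simp only [add_sq, sum_sub_distrib, sum_add_distrib, mul_pow, ← mul_sum, sum_const,
    card_univ, nsmul_eq_mul]
  rw [hT, hT2, hD, hC]
  ring

end Algebra

theorem isOpen_setOf_forall_pos_and_strictAnti {ι : Type*} [Finite ι] [Preorder ι] :
    IsOpen {x : ι → ℝ | (∀ i, 0 < x i) ∧ StrictAnti x} := by
  simp only [StrictAnti, Set.ofPred_and, Set.ofPred_forall]
  exact (isOpen_iInter_of_finite fun i => isOpen_lt continuous_const (continuous_apply i)).inter
    (isOpen_iInter_of_finite fun i => isOpen_iInter_of_finite fun j =>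
      isOpen_iInter_of_finite fun _ => isOpen_lt (continuous_apply j) (continuous_apply i))

theorem eventually_update_pos_and_strictAnti {ι : Type*} [Finite ι] [Preorder ι] [DecidableEq ι]
    {z : ι → ℝ} (hpos : ∀ i, 0 < z i) (hz : StrictAnti z) (r : ι) :
    ∀ᶠ t in 𝓝 (z r), (∀ i, 0 < update z r t i) ∧ StrictAnti (update z r t) := by
  have := isOpen_setOf_forall_pos_and_strictAnti.mem_nhds (show z ∈ _ from ⟨hpos, hz⟩)
  rw [← update_eq_self r z] at this
  exact (continuous_const.update r continuous_id).continuousAt.preimage_mem_nhds this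

theorem zDr_zDr_apply_of_eventuallyEq {n : ℕ} {r : Fin n} {f : (Fin n → ℝ) → ℝ} {z : Fin n → ℝ}
    {W : ℝ → ℝ} {W' : ℝ}
    (hfW : ∀ᶠ t in 𝓝 (z r), zDr r f (update z r t) = f (update z r t) * W t)
    (hf : DifferentiableAt ℝ (fun t => f (update z r t)) (z r)) (hW : HasDerivAt W W' (z r)) :
    zDr r (zDr r f) z = f z * (W (z r) ^ 2 + z r * W') := by
  have hz : zDr r f z = f z * W (z r) := by simpa using hfW.self_of_nhds
  change z r * deriv (fun t => zDr r f (update z r t)) (z r) = _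
  rw [EventuallyEq.deriv_eq (f₁ := fun t => zDr r f (update z r t)) hfW,
    (hf.hasDerivAt.fun_mul hW).deriv]
  simp only [zDr, update_eq_self] at hz ⊢
  linear_combination W (z r) * hz

noncomputable def logPhiA (n : ℕ) (μ₁ μ₂ : ℝ) (z : Fin n → ℝ) : ℝ :=
  μ₁ * ∑ r, Real.log (z r)
    + μ₂ * ∑ p ∈ univ.filter (fun p : Fin n × Fin n => p.1 < p.2), Real.log (z p.1 - z p.2)

theorem phiA_eq_exp_logPhiA {n : ℕ} (μ₁ μ₂ : ℝ) {z : Fin n → ℝ} (hpos : ∀ r, 0 < z r)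
    (hz : StrictAnti z) : phiA n μ₁ μ₂ z = Real.exp (logPhiA n μ₁ μ₂ z) := by
  rw [phiA, logPhiA, Real.exp_add]
  congr 1
  · rw [Real.rpow_def_of_pos (prod_pos fun r _ => hpos r),
      Real.log_prod fun r _ => (hpos r).ne', mul_comm]
  · rw [mul_sum, Real.exp_sum]
    exact prod_congr rfl fun p hp => by
      rw [Real.rpow_def_of_pos (sub_pos.2 (hz (mem_filter.1 hp).2)), mul_comm]

theorem hasDerivAt_logPhiA_update {n : ℕ} (μ₁ μ₂ : ℝ) {z : Fin n → ℝ} (hz₀ : ∀ r, z r ≠ 0)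
    (hz : Injective z) (r : Fin n) :
    HasDerivAt (fun t => logPhiA n μ₁ μ₂ (update z r t))
      (μ₁ / z r + μ₂ * ∑ s ∈ univ.erase r, (z r - z s)⁻¹) (z r) := by
  set δ : Fin n → ℝ := fun i => if i = r then 1 else 0
  have hcoord (i : Fin n) : HasDerivAt (fun t => update z r t i) (δ i) (z r) := by
    simpa [δ, Pi.single_apply] using hasDerivAt_pi.1 (hasDerivAt_update z r (z r)) i
  have hlog := HasDerivAt.fun_sum fun i (_ : i ∈ univ) =>
    (hcoord i).log (by simpa using hz₀ i)
  have hlogsub := HasDerivAt.fun_sum fun p (hp : p ∈ univ.filter fun p : Fin n × Fin n => p.1 < p.2)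
    => ((hcoord p.1).fun_sub (hcoord p.2)).log
      (by simpa using sub_ne_zero.2 (hz.ne (mem_filter.1 hp).2.ne))
  have hδ (i j : Fin n) :
      (δ i - δ j) / (z i - z j) = δ i / (z i - z j) + δ j / (z j - z i) := by
    rw [sub_div, ← neg_sub (z i), div_neg, sub_eq_add_neg]
  have hsum₁ : ∑ i, δ i / z i = 1 / z r := by simp [δ, ite_div]
  have hsum₂ : ∑ p ∈ univ.filter (fun p : Fin n × Fin n => p.1 < p.2),
      (δ p.1 - δ p.2) / (z p.1 - z p.2) = ∑ s ∈ univ.erase r, (z r - z s)⁻¹ := by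
    simp only [hδ, sum_filter_lt_add_swap fun i j => δ i / (z i - z j)]
    rw [Fintype.sum_eq_single r fun i hi => by simp [δ, hi]]
    simp [δ]
  refine ((hlog.const_mul μ₁).fun_add (hlogsub.const_mul μ₂)).congr_deriv ?_
  simp only [update_eq_self, hsum₁, hsum₂]
  ring

theorem hasDerivAt_phiA_update {n : ℕ} (μ₁ μ₂ : ℝ) {z : Fin n → ℝ} (hpos : ∀ r, 0 < z r)
    (hz : StrictAnti z) (r : Fin n) :
    HasDerivAt (fun t => phiA n μ₁ μ₂ (update z r t))
      (phiA n μ₁ μ₂ z * (μ₁ / z r + μ₂ * ∑ s ∈ univ.erase r, (z r - z s)⁻¹)) (z r) := by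
  have h := (hasDerivAt_logPhiA_update μ₁ μ₂ (fun s => (hpos s).ne') hz.injective r).exp
  rw [update_eq_self, ← phiA_eq_exp_logPhiA μ₁ μ₂ hpos hz] at h
  refine h.congr_of_eventuallyEq ?_
  filter_upwards [eventually_update_pos_and_strictAnti hpos hz r] with t ht
  exact phiA_eq_exp_logPhiA μ₁ μ₂ ht.1 ht.2

theorem zDr_phiA {n : ℕ} (μ₁ μ₂ : ℝ) {z : Fin n → ℝ} (hpos : ∀ r, 0 < z r)
    (hz : StrictAnti z) (r : Fin n) :
    zDr r (phiA n μ₁ μ₂) z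
      = phiA n μ₁ μ₂ z * (μ₁ + μ₂ * ∑ s ∈ univ.erase r, z r / (z r - z s)) := by
  rw [zDr, (hasDerivAt_phiA_update μ₁ μ₂ hpos hz r).deriv]
  have hsum : ∑ s ∈ univ.erase r, z r / (z r - z s) = z r * ∑ s ∈ univ.erase r, (z r - z s)⁻¹ := by
    simp only [mul_sum, div_eq_mul_inv]
  have := (hpos r).ne'
  rw [hsum]
  field_simp

theorem zDr_zDr_phiA {n : ℕ} (μ₁ μ₂ : ℝ) {z : Fin n → ℝ} (hpos : ∀ r, 0 < z r)
    (hz : StrictAnti z) (r : Fin n) :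
    zDr r (zDr r (phiA n μ₁ μ₂)) z = phiA n μ₁ μ₂ z *
      ((μ₁ + μ₂ * ∑ s ∈ univ.erase r, z r / (z r - z s)) ^ 2
        - μ₂ * ∑ s ∈ univ.erase r, z r * z s / (z r - z s) ^ 2) := by
  have hsub : ∀ s ∈ univ.erase r, z r - z s ≠ 0 := fun s hs =>
    sub_ne_zero.2 (hz.injective.ne (ne_of_mem_erase hs).symm)
  have hW : HasDerivAt (fun t => μ₁ + μ₂ * ∑ s ∈ univ.erase r, t / (t - z s))
      (μ₂ * ∑ s ∈ univ.erase r, -z s / (z r - z s) ^ 2) (z r) := by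
    refine ((HasDerivAt.fun_sum fun s hs => ?_).const_mul μ₂).const_add μ₁
    have hid : HasDerivAt (fun t : ℝ => t) 1 (z r) := hasDerivAt_id' _
    exact (hid.fun_div (hid.sub_const (z s)) (hsub s hs)).congr_deriv (by ring)
  rw [zDr_zDr_apply_of_eventuallyEq _ (hasDerivAt_phiA_update μ₁ μ₂ hpos hz r).differentiableAt hW]
  · have h : z r * (μ₂ * ∑ s ∈ univ.erase r, -z s / (z r - z s) ^ 2)
        = -(μ₂ * ∑ s ∈ univ.erase r, z r * z s / (z r - z s) ^ 2) := by
      simp only [mul_sum, ← sum_neg_distrib]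
      exact sum_congr rfl fun s _ => by ring
    rw [h, sub_eq_add_neg]
  · filter_upwards [eventually_update_pos_and_strictAnti hpos hz r] with t ht
    rw [zDr_phiA μ₁ μ₂ ht.1 ht.2, update_self]
    congr 3
    exact sum_congr rfl fun s hs => by rw [update_of_ne (ne_of_mem_erase hs)]

theorem phiA_calogero_general (n : ℕ) (μ₁ μ₂ : ℝ) (z : Fin n → ℝ)
    (hpos : ∀ r, 0 < z r) (hmono : ∀ i j : Fin n, i < j → z j < z i) :
    ∑ r : Fin n, zDr r (zDr r (phiA n μ₁ μ₂)) z
      + 2 * μ₂ * (1 - μ₂) *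
          (∑ p ∈ Finset.univ.filter (fun p : Fin n × Fin n => p.1 < p.2),
            z p.1 * z p.2 / (z p.1 - z p.2) ^ 2) * phiA n μ₁ μ₂ z
    = ((n : ℝ) * μ₁ ^ 2 + (n : ℝ) * ((n : ℝ) - 1) * (μ₁ + μ₂ / 2) * μ₂
        + 2 * (n.choose 3 : ℝ) * μ₂ ^ 2) * phiA n μ₁ μ₂ z := by
  have hz : StrictAnti z := fun i j h => hmono i j h
  rw [sum_congr rfl fun r _ => zDr_zDr_phiA μ₁ μ₂ hpos hz r, ← mul_sum]
  have h := calogero_sum_identity hz.injective μ₁ μ₂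
  rw [Fintype.card_fin] at h
  linear_combination phiA n μ₁ μ₂ z * h

/-- For `z₁ > z₂ > ⋯ > zₙ > 0`, the function `φ^A` satisfies the Calogero–Sutherland
equation `∑_r (z_r∂_{z_r})² φ^A + 2μ₂(1-μ₂)(∑_{i<j} z_iz_j/(z_i-z_j)²) φ^A
  = [nμ₁² + n(n-1)(μ₁+μ₂/2)μ₂ + 2(n choose 3)μ₂²] φ^A`. -/
theorem phiA_calogero (n : ℕ) (hn : 1 ≤ n) (μ₁ μ₂ : ℝ) (z : Fin n → ℝ)
    (hpos : ∀ r, 0 < z r) (hmono : ∀ i j : Fin n, i < j → z j < z i) :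
    ∑ r : Fin n, zDr r (zDr r (phiA n μ₁ μ₂)) z
      + 2 * μ₂ * (1 - μ₂) *
          (∑ p ∈ Finset.univ.filter (fun p : Fin n × Fin n => p.1 < p.2),
            z p.1 * z p.2 / (z p.1 - z p.2) ^ 2) * phiA n μ₁ μ₂ z
    = ((n : ℝ) * μ₁ ^ 2 + (n : ℝ) * ((n : ℝ) - 1) * (μ₁ + μ₂ / 2) * μ₂
        + 2 * (n.choose 3 : ℝ) * μ₂ ^ 2) * phiA n μ₁ μ₂ z :=
  phiA_calogero_general n μ₁ μ₂ z hpos hmono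
end
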